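/- arXiv:0810.2488 — 2 statements merged into one kernel-verified Lean document; each statement's English description precedes it below -/
import Mathlib

section
/- For any integer r ≥ 1, the identity F_r(x^{-1}, y^{-1}) = H_r(y^{-1}) − 1 − y^{-r} F_r(x,y) holds, where F_r(x,y) = Σ_{k=1}^{r−1} ((x^k−1)/(x^r−1)) y^k and H_r(y) = Σ_{k=0}^{r−1} y^k. -/
/-!
Write `c_r(x, k) = (x^k - 1)/(x^r - 1)` for the coefficients of `F_r`. Multiplying numerator and
denominator by `x^r` gives the coefficient duality `c_r(x⁻¹, k) = 1 - c_r(x, r - k)`. Substituting it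
into `F_r(x⁻¹, y⁻¹)` splits off `∑_{k=1}^{r-1} y^{-k} = H_r(y⁻¹) - 1`, and the rest is
`y^{-r} F_r(x, y)` after the reflection `k ↦ r - k` of the summation range.
-/

open Finset

theorem Finset.sum_Ico_one_reflect {M : Type*} [AddCommMonoid M] (f : ℕ → M) (r : ℕ) :
    ∑ k ∈ Ico 1 r, f (r - k) = ∑ k ∈ Ico 1 r, f k := by
  refine sum_nbij' (r - ·) (r - ·) ?_ ?_ ?_ ?_ (fun _ _ ↦ rfl) <;> intro k hk <;>
    simp only [mem_Ico] at hk ⊢ <;> omega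

theorem RatFunc.X_pow_ne_one {K : Type*} [Field K] {r : ℕ} (hr : r ≠ 0) :
    (RatFunc.X : RatFunc K) ^ r ≠ 1 := by
  intro h
  refine RatFunc.transcendental_X (K := K) (IsAlgebraic.of_pow (Nat.pos_of_ne_zero hr) ?_)
  rw [h]
  exact isAlgebraic_one

section

variable {K : Type*} [Field K]

/-- The paper's `F_r(x, y)`. -/
def geomRatioSum (r : ℕ) (x y : K) : K :=
  ∑ k ∈ Ico 1 r, (x ^ k - 1) / (x ^ r - 1) * y ^ k

theorem inv_pow_sub_one_div_inv_pow_sub_one {x : K} (hx : x ≠ 0) {k r : ℕ} (hxr : x ^ r ≠ 1)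
    (hk : k ≤ r) : (x⁻¹ ^ k - 1) / (x⁻¹ ^ r - 1) = 1 - (x ^ (r - k) - 1) / (x ^ r - 1) := by
  obtain ⟨j, rfl⟩ := Nat.exists_eq_add_of_le hk
  have hden : x ^ (k + j) - 1 ≠ 0 := sub_ne_zero.2 hxr
  have hden' : x⁻¹ ^ (k + j) - 1 ≠ 0 := by
    rw [inv_pow, sub_ne_zero, Ne, inv_eq_one]
    exact hxr
  rw [Nat.add_sub_cancel_left, one_sub_div hden, div_eq_div_iff hden' hden, inv_pow, inv_pow,
    pow_add]
  field_simp
  ring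

theorem inv_pow_mul_pow_sub {y : K} (hy : y ≠ 0) {k r : ℕ} (hk : k ≤ r) :
    y⁻¹ ^ r * y ^ (r - k) = y⁻¹ ^ k := by
  obtain ⟨j, rfl⟩ := Nat.exists_eq_add_of_le hk
  rw [Nat.add_sub_cancel_left, pow_add, mul_assoc, inv_pow y j, inv_mul_cancel₀ (pow_ne_zero j hy),
    mul_one]

theorem geomRatioSum_inv_inv {r : ℕ} (hr : 1 ≤ r) {x y : K} (hx : x ≠ 0) (hxr : x ^ r ≠ 1)
    (hy : y ≠ 0) :
    geomRatioSum r x⁻¹ y⁻¹ = ∑ k ∈ range r, y⁻¹ ^ k - 1 - y⁻¹ ^ r * geomRatioSum r x y := by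
  rw [geomRatioSum, geomRatioSum,
    ← sum_Ico_one_reflect (fun k ↦ (x ^ k - 1) / (x ^ r - 1) * y ^ k), mul_sum,
    sum_range_eq_add_Ico _ hr, pow_zero, add_sub_cancel_left, ← sum_sub_distrib]
  refine sum_congr rfl fun k hk ↦ ?_
  have hkr : k ≤ r := (mem_Ico.1 hk).2.le
  rw [inv_pow_sub_one_div_inv_pow_sub_one hx hxr hkr, mul_left_comm, inv_pow_mul_pow_sub hy hkr]
  ring

end

/-- For `r ≥ 1`, with `H_r(y) = ∑_{k<r} y^k` and
`F_r(x,y) = ∑_{k=1}^{r-1} ((x^k - 1)/(x^r - 1)) y^k`, one has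
`F_r(x⁻¹, y⁻¹) = H_r(y⁻¹) - 1 - y^{-r} F_r(x,y)` for independent invertible
variables `x`, `y` (realized inside the iterated rational function field
`ℚ(x)(y)`). -/
theorem F_dual_identity (r : ℕ) (hr : 1 ≤ r) :
    let x : RatFunc (RatFunc ℚ) := RatFunc.C RatFunc.X
    let y : RatFunc (RatFunc ℚ) := RatFunc.X
    ∑ k ∈ Finset.Ico 1 r, ((x⁻¹) ^ k - 1) / ((x⁻¹) ^ r - 1) * (y⁻¹) ^ k
      = (∑ k ∈ Finset.range r, (y⁻¹) ^ k) - 1 -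
          (y⁻¹) ^ r * ∑ k ∈ Finset.Ico 1 r, (x ^ k - 1) / (x ^ r - 1) * y ^ k := by
  intro x y
  have hxr : x ^ r ≠ 1 := by
    rw [← map_pow]
    exact (map_ne_one_iff _ RatFunc.C_injective).2 (RatFunc.X_pow_ne_one (by omega))
  exact geomRatioSum_inv_inv hr ((map_ne_zero _).2 RatFunc.X_ne_zero) hxr RatFunc.X_ne_zero
end

section
/- For integers r ≥ 2 and 0 ≤ k ≤ r−1, define ĨF_{r,k}(x_+,x_−) as the sum of the coefficients of y^k and y^{k−r} in F_r(x_+,y)·F_r(x_−,y^{-1}) − H_r(y)·Σ_{j=0}^{r−1} F_{r,j}(x_+)F_{r,j}(x_−) (and just the coefficient of y^0 when k = 0). Then ĨF_{r,k}(x_+,x_−) = ( (x_+^k−1)/(x_+^r−1) + (x_−^{r−k}−1)/(x_−^r−1) − 1 ) / (x_+x_− − 1) as rational functions. -/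
/-!
Clearing the factor `y^{r-1}`, the coefficient of `y^k` (`k ≥ 1`) pairs `F_{r,j+k}(x₊)` with
`F_{r,j}(x₋)`, the coefficient of `y^{k-r}` pairs `F_{r,j}(x₊)` with `F_{r,j+r-k}(x₋)`, and the
`H_r` term contributes the diagonal sum exactly once. After multiplying by
`(x₊^r - 1)(x₋^r - 1)` each of the three sums is a combination of geometric series in `x₊`, `x₋`
and `x₊x₋`, and the formula becomes an identity of rational functions. For `k = 0` the diagonal
cancels against the `H_r` term and both sides vanish.
-/

open Polynomial Finset

section Coefficients

variable {R : Type*} [CommSemiring R]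

theorem coeff_sum_mul_sum_reverse (a b : ℕ → R) (r m : ℕ) :
    ((∑ i ∈ range r, C (a i) * X ^ i) * ∑ j ∈ range r, C (b j) * X ^ (r - 1 - j)).coeff m =
      ∑ i ∈ range r, ∑ j ∈ range r, if i + (r - 1 - j) = m then a i * b j else 0 := by
  simp only [sum_mul_sum, finsetSum_coeff]
  refine sum_congr rfl fun i _ => sum_congr rfl fun j _ => ?_
  rw [mul_mul_mul_comm, ← C_mul, ← pow_add, coeff_C_mul_X_pow]
  simp only [eq_comm]

theorem coeff_sum_mul_sum_reverse_add {k r : ℕ} (a b : ℕ → R) (hk : k ≤ r) :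
    ((∑ i ∈ range r, C (a i) * X ^ i) * ∑ j ∈ range r, C (b j) * X ^ (r - 1 - j)).coeff
        (k + r - 1) =
      ∑ j ∈ range (r - k), a (j + k) * b j := by
  rw [coeff_sum_mul_sum_reverse, sum_comm]
  have (j) (hj : j ∈ range r) (i) : i + (r - 1 - j) = k + r - 1 ↔ i = j + k := by
    rw [mem_range] at hj
    omega
  simp_rw +contextual [this, sum_ite_eq', ← sum_filter]
  congr 1
  ext j
  simp only [mem_filter, mem_range]
  omega

theorem coeff_sum_mul_sum_reverse_sub_one {k r : ℕ} (a b : ℕ → R) (hk : 1 ≤ k) (hkr : k ≤ r) :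
    ((∑ i ∈ range r, C (a i) * X ^ i) * ∑ j ∈ range r, C (b j) * X ^ (r - 1 - j)).coeff
        (k - 1) =
      ∑ i ∈ range k, a i * b (i + (r - k)) := by
  rw [coeff_sum_mul_sum_reverse]
  have (i j) (hj : j ∈ range r) : i + (r - 1 - j) = k - 1 ↔ j = i + (r - k) := by
    rw [mem_range] at hj
    omega
  simp_rw +contextual [this, sum_ite_eq', ← sum_filter]
  congr 1
  ext j
  simp only [mem_filter, mem_range]
  omega

theorem coeff_sum_X_pow_mul_C (c : R) (r m : ℕ) :
    ((∑ j ∈ range r, X ^ (j + r - 1)) * C c).coeff m =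
      ∑ j ∈ range r, if m = j + r - 1 then c else 0 := by
  simp only [sum_mul, finsetSum_coeff, mul_comm (X ^ _), coeff_C_mul_X_pow]

theorem coeff_sum_X_pow_mul_C_add {k r : ℕ} (c : R) (hk : k < r) :
    ((∑ j ∈ range r, X ^ (j + r - 1)) * C c).coeff (k + r - 1) = c := by
  rw [coeff_sum_X_pow_mul_C, sum_eq_single_of_mem k (mem_range.2 hk), if_pos rfl]
  intro j _ hj
  exact if_neg (by omega)

theorem coeff_sum_X_pow_mul_C_of_lt {m r : ℕ} (c : R) (hm : m < r - 1) :
    ((∑ j ∈ range r, X ^ (j + r - 1)) * C c).coeff m = 0 := by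
  rw [coeff_sum_X_pow_mul_C]
  exact sum_eq_zero fun j _ => if_neg (by omega)

end Coefficients

section FieldIdentity

variable {K : Type*} [Field K] {x z : K}

theorem sum_pow_add_sub_one_mul_pow_add_sub_one (hx : x ≠ 1) (hz : z ≠ 1) (hxz : x * z ≠ 1)
    (s t n : ℕ) :
    ∑ j ∈ range n, (x ^ (j + s) - 1) * (z ^ (j + t) - 1) =
      x ^ s * z ^ t * (((x * z) ^ n - 1) / (x * z - 1)) - x ^ s * ((x ^ n - 1) / (x - 1)) -
        z ^ t * ((z ^ n - 1) / (z - 1)) + n := by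
  have (j : ℕ) : (x ^ (j + s) - 1) * (z ^ (j + t) - 1) =
      x ^ s * z ^ t * (x * z) ^ j - x ^ s * x ^ j - z ^ t * z ^ j + 1 := by
    ring
  simp only [this, sum_add_distrib, sum_sub_distrib, ← mul_sum, geom_sum_eq hx, geom_sum_eq hz,
    geom_sum_eq hxz, sum_const, card_range, nsmul_one]

theorem shifted_sums_sub_diagonal_sum (hx : x ≠ 1) (hz : z ≠ 1) (hxz : x * z ≠ 1) (k n : ℕ)
    (hxr : x ^ (k + n) ≠ 1) (hzr : z ^ (k + n) ≠ 1) :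
    ∑ j ∈ range n, (x ^ (j + k) - 1) / (x ^ (k + n) - 1) * ((z ^ j - 1) / (z ^ (k + n) - 1)) +
        ∑ j ∈ range k, (x ^ j - 1) / (x ^ (k + n) - 1) * ((z ^ (j + n) - 1) / (z ^ (k + n) - 1)) -
        ∑ j ∈ range (k + n), (x ^ j - 1) / (x ^ (k + n) - 1) * ((z ^ j - 1) / (z ^ (k + n) - 1)) =
      ((x ^ k - 1) / (x ^ (k + n) - 1) + (z ^ n - 1) / (z ^ (k + n) - 1) - 1) / (x * z - 1) := by
  have h := sum_pow_add_sub_one_mul_pow_add_sub_one hx hz hxz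
  have h1 := h k 0 n
  have h2 := h 0 n k
  have h3 := h 0 0 (k + n)
  simp only [add_zero, pow_zero, one_mul, mul_one] at h1 h2 h3
  simp only [div_mul_div_comm, ← sum_div, h1, h2, h3]
  have : x - 1 ≠ 0 := sub_ne_zero.2 hx
  have : z - 1 ≠ 0 := sub_ne_zero.2 hz
  have : x * z - 1 ≠ 0 := sub_ne_zero.2 hxz
  have : x ^ (k + n) - 1 ≠ 0 := sub_ne_zero.2 hxr
  have : z ^ (k + n) - 1 ≠ 0 := sub_ne_zero.2 hzr
  field_simp
  push_cast
  ring

end FieldIdentity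

namespace RatFunc

variable {L : Type*} [Field L]

theorem algebraMap_ne_one_of_coeff_zero {p : L[X]} (hp : p.coeff 0 = 0) :
    algebraMap L[X] (RatFunc L) p ≠ 1 := by
  rw [← map_one (algebraMap L[X] (RatFunc L)), Ne, (algebraMap_injective L).eq_iff]
  rintro rfl
  simp at hp

theorem X_pow_ne_one_s14 {n : ℕ} (hn : n ≠ 0) : (X : RatFunc L) ^ n ≠ 1 := by
  rw [← algebraMap_X, ← map_pow]
  exact algebraMap_ne_one_of_coeff_zero (by simp [coeff_X_pow, hn.symm])

theorem C_mul_X_ne_one (c : L) : C c * (X : RatFunc L) ≠ 1 := by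
  rw [← algebraMap_C, ← algebraMap_X, ← map_mul]
  exact algebraMap_ne_one_of_coeff_zero (by simp)

theorem C_X_pow_ne_one {n : ℕ} (hn : n ≠ 0) : (C X : RatFunc (RatFunc L)) ^ n ≠ 1 := by
  rw [← map_pow]
  exact (map_ne_one_iff C C_injective).2 (X_pow_ne_one_s14 hn)

end RatFunc

/-- For `r ≥ 2` and `0 ≤ k ≤ r - 1`, the combination `ĨF_{r,k}(x₊,x₋)` of
Laurent coefficients of
`F_r(x₊,y)·F_r(x₋,y⁻¹) - H_r(y)·∑_j F_{r,j}(x₊)F_{r,j}(x₋)` equals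
`((x₊^k - 1)/(x₊^r - 1) + (x₋^{r-k} - 1)/(x₋^r - 1) - 1)/(x₊x₋ - 1)`.
The Laurent polynomial in `y` is realized as the polynomial `P` obtained by
multiplying through by `y^{r-1}`, so the coefficient of `y^j` is
`P.coeff (j + r - 1)`; `ĨF_{r,k}` is the sum of the coefficients of `y^k` and
`y^{k-r}` (just the coefficient of `y^0` when `k = 0`).  The variables
`x₊, x₋` are independent, realized in the iterated rational function field. -/
theorem IIF_coeff_formula (r : ℕ) (hr : 2 ≤ r) (k : ℕ) (hk : k ≤ r - 1) :
    let K := RatFunc (RatFunc ℚ)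
    let xp : K := RatFunc.C RatFunc.X
    let xm : K := RatFunc.X
    let F : K → ℕ → K := fun x j => (x ^ j - 1) / (x ^ r - 1)
    let P : Polynomial K :=
      (∑ j ∈ Finset.range r, Polynomial.C (F xp j) * Polynomial.X ^ j) *
          (∑ j ∈ Finset.range r, Polynomial.C (F xm j) * Polynomial.X ^ (r - 1 - j)) -
        (∑ j ∈ Finset.range r, Polynomial.X ^ (j + r - 1)) *
          Polynomial.C (∑ j ∈ Finset.range r, F xp j * F xm j)
    (if k = 0 then P.coeff (r - 1) else P.coeff (k + r - 1) + P.coeff (k - 1))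
      = (F xp k + F xm (r - k) - 1) / (xp * xm - 1) := by
  intro K xp xm F P
  have hxr : xp ^ r ≠ 1 := RatFunc.C_X_pow_ne_one (by omega)
  have hzr : xm ^ r ≠ 1 := RatFunc.X_pow_ne_one_s14 (by omega)
  rcases Nat.eq_zero_or_pos k with rfl | hk0
  · have hdiag := coeff_sum_mul_sum_reverse_add (F xp) (F xm) (Nat.zero_le r)
    have hconst := coeff_sum_X_pow_mul_C_add (∑ j ∈ range r, F xp j * F xm j) (by omega : 0 < r)
    simp only [zero_add, Nat.sub_zero, add_zero] at hdiag hconst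
    rw [if_pos rfl, coeff_sub, hdiag, hconst, sub_self]
    simp [F, div_self (sub_ne_zero.2 hzr)]
  obtain ⟨n, rfl⟩ : ∃ n, r = k + n := ⟨r - k, by omega⟩
  rw [if_neg hk0.ne', coeff_sub, coeff_sub, coeff_sum_mul_sum_reverse_add _ _ (by omega),
    coeff_sum_mul_sum_reverse_sub_one _ _ hk0 (by omega), coeff_sum_X_pow_mul_C_add _ (by omega),
    coeff_sum_X_pow_mul_C_of_lt _ (by omega), sub_zero, Nat.add_sub_cancel_left,
    sub_add_eq_add_sub]
  have hx : xp ≠ 1 := fun h => RatFunc.C_X_pow_ne_one one_ne_zero ((pow_one _).trans h)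
  have hz : xm ≠ 1 := fun h => RatFunc.X_pow_ne_one_s14 one_ne_zero ((pow_one _).trans h)
  exact shifted_sums_sub_diagonal_sum hx hz (RatFunc.C_mul_X_ne_one _) k n hxr hzr
end
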